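/- arXiv:2508.14572 — 2 statements merged into one kernel-verified Lean document; each statement's English description precedes it below -/
import Mathlib

section
/- Let f ∈ C¹([a,b]; ℝ) such that f' is nonzero and monotonic, and let g : [a,b] → ℝ be Lipschitz and monotonic on [a,b]. Then for all z ≠ 0, |∫_a^b e^{i z f(x)} g(x) dx| ≤ (12/|z|) · sup_{x ∈ [a,b]} 1/|f'(x)| · sup_{x ∈ [a,b]} |g(x)|. -/
open MeasureTheory Set intervalIntegral


lemma abel_key (a b : ℝ) (hab : a ≤ b) (g : ℝ → ℝ) (φ : ℝ → ℂ)
    (hg : ContinuousOn g (Set.Icc a b))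
    (hgm : MonotoneOn g (Set.Icc a b))
    (hφ : ContinuousOn φ (Set.Icc a b))
    {C D : ℝ} (hC : ∀ c ∈ Set.Icc a b, ‖∫ x in a..c, φ x‖ ≤ C)
    (hD : ∀ x ∈ Set.Icc a b, |g x| + |g x - g a| ≤ D) :
    ‖∫ x in a..b, (g x : ℂ) * φ x‖ ≤ D * C := by
  have ha : a ∈ Set.Icc a b := ⟨le_rfl, hab⟩
  have hC0 : 0 ≤ C := by simpa using hC a ha
  have hD0 : 0 ≤ D := le_trans (by positivity) (hD a ha)
  rcases eq_or_lt_of_le hab with rfl | hlt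
  · simp only [intervalIntegral.integral_same, norm_zero]; positivity
  obtain ⟨M, hM⟩ := isCompact_Icc.exists_bound_of_continuousOn hφ
  have hM0 : 0 ≤ M := le_trans (norm_nonneg _) (hM a ha)
  have hgφ : ContinuousOn (fun t => (g t : ℂ) * φ t) (Set.Icc a b) :=
    (Complex.continuous_ofReal.comp_continuousOn hg).mul hφ
  have key : ∀ n : ℕ, 0 < n →
      ‖∫ x in a..b, (g x : ℂ) * φ x‖ ≤ D * C + (M * (b - a) * (g b - g a)) / n := by
    intro n hn
    have hn' : (n : ℝ) ≠ 0 := Nat.cast_ne_zero.2 hn.ne'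
    set δ : ℝ := (b - a) / n with hδdef
    have hδ : 0 < δ := div_pos (sub_pos.2 hlt) (Nat.cast_pos.2 hn)
    set x : ℕ → ℝ := fun i => a + i * δ with hxdef
    have hx0 : x 0 = a := by simp [hxdef]
    have hxn : x n = b := by
      simp only [hxdef, hδdef]
      field_simp
      ring
    have hxmono : ∀ i j : ℕ, i ≤ j → x i ≤ x j := by
      intro i j h
      simp only [hxdef]
      have : (i : ℝ) ≤ j := Nat.cast_le.2 h
      nlinarith
    have hmem : ∀ i : ℕ, i ≤ n → x i ∈ Set.Icc a b := by
      intro i hi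
      constructor
      · simp only [hxdef]; nlinarith [hδ.le, (Nat.cast_nonneg i : (0:ℝ) ≤ i)]
      · rw [← hxn]; exact hxmono i n hi
    have hint : ∀ ⦃u v : ℝ⦄, u ∈ Set.Icc a b → v ∈ Set.Icc a b →
        IntervalIntegrable (fun t => (g t : ℂ) * φ t) volume u v := fun u v hu hv =>
      (hgφ.mono (Set.uIcc_subset_Icc hu hv)).intervalIntegrable
    have hintφ : ∀ ⦃u v : ℝ⦄, u ∈ Set.Icc a b → v ∈ Set.Icc a b →
        IntervalIntegrable φ volume u v := fun u v hu hv =>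
      (hφ.mono (Set.uIcc_subset_Icc hu hv)).intervalIntegrable
    have hsplit : ∫ t in a..b, (g t : ℂ) * φ t
        = ∑ i ∈ Finset.range n, ∫ t in x i..x (i+1), (g t : ℂ) * φ t := by
      have := intervalIntegral.sum_integral_adjacent_intervals (μ := volume)
        (f := fun t => (g t : ℂ) * φ t) (a := x) (n := n)
        (fun k hk => hint (hmem k hk.le) (hmem (k+1) hk))
      rw [hx0, hxn] at this
      exact this.symm
    set S : ℂ := ∑ i ∈ Finset.range n, (g (x i) : ℂ) * ∫ t in x i..x (i+1), φ t with hSdef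
    -- error bound
    have herr : ‖(∫ t in a..b, (g t : ℂ) * φ t) - S‖ ≤ (g b - g a) * (M * δ) := by
      rw [hsplit, hSdef, ← Finset.sum_sub_distrib]
      refine le_trans (norm_sum_le _ _) ?_
      have hterm : ∀ i ∈ Finset.range n,
          ‖(∫ t in x i..x (i+1), (g t : ℂ) * φ t) - (g (x i) : ℂ) * ∫ t in x i..x (i+1), φ t‖
            ≤ (g (x (i+1)) - g (x i)) * (M * δ) := by
        intro i hi
        have hi' : i < n := Finset.mem_range.1 hi
        have hxiI : x i ∈ Set.Icc a b := hmem i hi'.le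
        have hxi1I : x (i+1) ∈ Set.Icc a b := hmem (i+1) hi'
        have hle : x i ≤ x (i+1) := hxmono i (i+1) (Nat.le_succ i)
        have heq : (∫ t in x i..x (i+1), (g t : ℂ) * φ t)
            - (g (x i) : ℂ) * ∫ t in x i..x (i+1), φ t
            = ∫ t in x i..x (i+1), ((g t - g (x i) : ℝ) : ℂ) * φ t := by
          rw [← intervalIntegral.integral_const_mul,
            ← intervalIntegral.integral_sub (hint hxiI hxi1I)
              ((hintφ hxiI hxi1I).const_mul _)]
          congr 1
          funext t
          push_cast
          ring
        rw [heq]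
        have hδeq : x (i+1) - x i = δ := by simp only [hxdef]; push_cast; ring
        have := intervalIntegral.norm_integral_le_of_norm_le_const
          (a := x i) (b := x (i+1)) (C := (g (x (i+1)) - g (x i)) * M)
          (f := fun t => ((g t - g (x i) : ℝ) : ℂ) * φ t) ?_
        · rw [hδeq, abs_of_pos hδ] at this
          calc _ ≤ _ := this
          _ = (g (x (i+1)) - g (x i)) * (M * δ) := by ring
        · intro t ht
          rw [Set.uIoc_of_le hle] at ht
          have htI : t ∈ Set.Icc a b := ⟨le_trans hxiI.1 ht.1.le, le_trans ht.2 hxi1I.2⟩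
          have h1 : g (x i) ≤ g t := hgm hxiI htI ht.1.le
          have h2 : g t ≤ g (x (i+1)) := hgm htI hxi1I ht.2
          rw [norm_mul, Complex.norm_real, Real.norm_eq_abs, abs_of_nonneg (by linarith)]
          exact mul_le_mul (by linarith) (hM t htI) (norm_nonneg _) (by linarith)
      refine le_trans (Finset.sum_le_sum hterm) ?_
      rw [← Finset.sum_mul, Finset.sum_range_sub (fun i => g (x i)), hx0, hxn]
    -- Abel bound on S
    have hps : ∀ m : ℕ, m ≤ n →
        ∑ i ∈ Finset.range m, ∫ t in x i..x (i+1), φ t = ∫ t in a..x m, φ t := by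
      intro m hm
      have := intervalIntegral.sum_integral_adjacent_intervals (μ := volume)
        (f := φ) (a := x) (n := m)
        (fun k hk => hintφ (hmem k (le_trans hk.le hm)) (hmem (k+1) (lt_of_lt_of_le hk hm)))
      rw [hx0] at this
      exact this
    have hSbound : ‖S‖ ≤ D * C := by
      have habel := Finset.sum_range_by_parts (fun i => (g (x i) : ℂ))
        (fun i => ∫ t in x i..x (i+1), φ t) n
      simp only [smul_eq_mul] at habel
      rw [hSdef, habel, hps n le_rfl]
      have hn1 : n - 1 ≤ n := Nat.sub_le n 1
      have hxn1 : x (n-1) ∈ Set.Icc a b := hmem _ hn1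
      refine le_trans (norm_sub_le _ _) ?_
      have h1 : ‖(g (x (n-1)) : ℂ) * ∫ t in a..x n, φ t‖ ≤ |g (x (n-1))| * C := by
        rw [norm_mul, Complex.norm_real, Real.norm_eq_abs]
        exact mul_le_mul_of_nonneg_left (by rw [hxn]; exact hC b ⟨hab, le_rfl⟩) (abs_nonneg _)
      have h2 : ‖∑ i ∈ Finset.range (n-1),
          ((g (x (i+1)) : ℂ) - (g (x i) : ℂ)) * ∑ j ∈ Finset.range (i+1), ∫ t in x j..x (j+1), φ t‖
          ≤ (g (x (n-1)) - g a) * C := by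
        refine le_trans (norm_sum_le _ _) ?_
        have hterm : ∀ i ∈ Finset.range (n-1),
            ‖((g (x (i+1)) : ℂ) - (g (x i) : ℂ)) * ∑ j ∈ Finset.range (i+1), ∫ t in x j..x (j+1), φ t‖
              ≤ (g (x (i+1)) - g (x i)) * C := by
          intro i hi
          have hi' : i < n - 1 := Finset.mem_range.1 hi
          have hi1 : i + 1 ≤ n := by omega
          rw [hps (i+1) hi1, norm_mul, ← Complex.ofReal_sub, Complex.norm_real, Real.norm_eq_abs,
            abs_of_nonneg (sub_nonneg.2 (hgm (hmem i (by omega)) (hmem (i+1) hi1) (hxmono i (i+1) (Nat.le_succ i))))]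
          exact mul_le_mul_of_nonneg_left (hC _ (hmem (i+1) hi1))
            (sub_nonneg.2 (hgm (hmem i (by omega)) (hmem (i+1) hi1) (hxmono i (i+1) (Nat.le_succ i))))
        refine le_trans (Finset.sum_le_sum hterm) ?_
        rw [← Finset.sum_mul, Finset.sum_range_sub (fun i => g (x i)), hx0]
      refine le_trans (add_le_add h1 h2) ?_
      have hDx := hD (x (n-1)) hxn1
      have : g (x (n-1)) - g a ≤ |g (x (n-1)) - g a| := le_abs_self _
      nlinarith
    calc ‖∫ t in a..b, (g t : ℂ) * φ t‖
        ≤ ‖S‖ + ‖(∫ t in a..b, (g t : ℂ) * φ t) - S‖ := by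
          have := norm_add_le S ((∫ t in a..b, (g t : ℂ) * φ t) - S)
          simpa using this
      _ ≤ D * C + (g b - g a) * (M * δ) := add_le_add hSbound herr
      _ = D * C + (M * (b - a) * (g b - g a)) / n := by rw [hδdef]; ring
  have htend : Filter.Tendsto (fun n : ℕ => D * C + (M * (b - a) * (g b - g a)) / n)
      Filter.atTop (nhds (D * C + 0)) :=
    Filter.Tendsto.const_add _ (tendsto_const_div_atTop_nhds_zero_nat _)
  rw [add_zero] at htend
  exact ge_of_tendsto htend (Filter.eventually_atTop.2 ⟨1, fun n hn => key n hn⟩)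



lemma abel_bound (a b : ℝ) (hab : a ≤ b) (g : ℝ → ℝ) (φ : ℝ → ℂ)
    (hg : ContinuousOn g (Set.Icc a b))
    (hgm : MonotoneOn g (Set.Icc a b) ∨ AntitoneOn g (Set.Icc a b))
    (hφ : ContinuousOn φ (Set.Icc a b))
    {C D : ℝ} (hC : ∀ c ∈ Set.Icc a b, ‖∫ x in a..c, φ x‖ ≤ C)
    (hD : ∀ x ∈ Set.Icc a b, |g x| + |g x - g a| ≤ D) :
    ‖∫ x in a..b, (g x : ℂ) * φ x‖ ≤ D * C := by
  rcases hgm with hgm | hgm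
  · exact abel_key a b hab g φ hg hgm hφ hC hD
  · have hkey := abel_key a b hab (fun t => -g t) φ (hg.neg)
      (fun u hu v hv huv => neg_le_neg (hgm hu hv huv)) hφ hC
      (D := D) ?_
    · have : ∫ x in a..b, ((-g x : ℝ) : ℂ) * φ x = -∫ x in a..b, (g x : ℂ) * φ x := by
        rw [← intervalIntegral.integral_neg]
        congr 1; funext t; push_cast; ring
      rw [this, norm_neg] at hkey
      exact hkey
    · intro t ht
      have := hD t ht
      calc |(-g t)| + |(-g t) - (-g a)| = |g t| + |g t - g a| := by
            rw [abs_neg, show (-g t) - (-g a) = -(g t - g a) by ring, abs_neg]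
        _ ≤ D := this



-- same sign: |p - q| ≤ max |p| |q|
lemma abs_sub_le_max_of_sign {p q : ℝ} (hpq : 0 ≤ p * q) : |p - q| ≤ max |p| |q| := by
  rcases le_total 0 p with hp | hp <;> rcases le_total 0 q with hq | hq
  · rw [abs_sub_le_iff]
    constructor
    · calc p - q ≤ p := by linarith
        _ ≤ |p| := le_abs_self _
        _ ≤ _ := le_max_left _ _
    · calc q - p ≤ q := by linarith
        _ ≤ |q| := le_abs_self _
        _ ≤ _ := le_max_right _ _
  · have hpq0 : p * q = 0 := le_antisymm (by nlinarith) hpq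
    rcases mul_eq_zero.1 hpq0 with rfl | rfl
    · simp [abs_neg]
    · simp
  · have hpq0 : p * q = 0 := le_antisymm (by nlinarith) hpq
    rcases mul_eq_zero.1 hpq0 with rfl | rfl
    · simp [abs_neg]
    · simp
  · rw [abs_sub_le_iff]
    constructor
    · calc p - q ≤ -q := by linarith
        _ ≤ |q| := neg_le_abs _
        _ ≤ _ := le_max_right _ _
    · calc q - p ≤ -p := by linarith
        _ ≤ |p| := neg_le_abs _
        _ ≤ _ := le_max_left _ _

lemma monoAnti_const_mul {s : Set ℝ} {u : ℝ → ℝ}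
    (h : MonotoneOn u s ∨ AntitoneOn u s) (c : ℝ) :
    MonotoneOn (fun x => c * u x) s ∨ AntitoneOn (fun x => c * u x) s := by
  rcases le_total 0 c with hc | hc <;> rcases h with h | h
  · exact Or.inl fun x hx y hy hxy => mul_le_mul_of_nonneg_left (h hx hy hxy) hc
  · exact Or.inr fun x hx y hy hxy => mul_le_mul_of_nonneg_left (h hx hy hxy) hc
  · exact Or.inr fun x hx y hy hxy => mul_le_mul_of_nonpos_left (h hx hy hxy) hc
  · exact Or.inl fun x hx y hy hxy => mul_le_mul_of_nonpos_left (h hx hy hxy) hc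

/-- Van der Corput type lemma with monotone Lipschitz amplitude `g`. -/
theorem stmt1 (a b : ℝ) (hab : a ≤ b) (f f' g : ℝ → ℝ)
    (hderiv : ∀ x ∈ Set.Icc a b, HasDerivAt f (f' x) x)
    (hcont : ContinuousOn f' (Set.Icc a b))
    (hne : ∀ x ∈ Set.Icc a b, f' x ≠ 0)
    (hmono : MonotoneOn f' (Set.Icc a b) ∨ AntitoneOn f' (Set.Icc a b))
    (K : NNReal) (hgLip : LipschitzOnWith K g (Set.Icc a b))
    (hgmono : MonotoneOn g (Set.Icc a b) ∨ AntitoneOn g (Set.Icc a b))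
    (z : ℝ) (hz : z ≠ 0) :
    ‖∫ x in a..b, Complex.exp (Complex.I * z * f x) * (g x : ℂ)‖ ≤
      (12 / |z|) * sSup ((fun x => 1 / |f' x|) '' Set.Icc a b) *
        sSup ((fun x => |g x|) '' Set.Icc a b) := by
  have ha : a ∈ Set.Icc a b := ⟨le_rfl, hab⟩
  set C1 := sSup ((fun x => 1 / |f' x|) '' Set.Icc a b) with hC1def
  set C2 := sSup ((fun x => |g x|) '' Set.Icc a b) with hC2def
  have hzabs : 0 < |z| := abs_pos.2 hz
  -- continuity facts
  have hfc : ContinuousOn f (Set.Icc a b) := fun x hx =>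
    (hderiv x hx).continuousAt.continuousWithinAt
  have hgc : ContinuousOn g (Set.Icc a b) := hgLip.continuousOn
  have hec : ContinuousOn (fun x => Complex.exp (Complex.I * z * f x)) (Set.Icc a b) :=
    Complex.continuous_exp.comp_continuousOn
      (continuousOn_const.mul (Complex.continuous_ofReal.comp_continuousOn hfc))
  have h1fc : ContinuousOn (fun x => 1 / |f' x|) (Set.Icc a b) :=
    continuousOn_const.div hcont.abs (fun x hx => abs_ne_zero.2 (hne x hx))
  -- sup bounds
  have hbdd1 : BddAbove ((fun x => 1 / |f' x|) '' Set.Icc a b) :=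
    (isCompact_Icc.image_of_continuousOn h1fc).bddAbove
  have hbdd2 : BddAbove ((fun x => |g x|) '' Set.Icc a b) :=
    (isCompact_Icc.image_of_continuousOn hgc.abs).bddAbove
  have hC1le : ∀ x ∈ Set.Icc a b, 1 / |f' x| ≤ C1 := fun x hx =>
    le_csSup hbdd1 (Set.mem_image_of_mem _ hx)
  have hC2le : ∀ x ∈ Set.Icc a b, |g x| ≤ C2 := fun x hx =>
    le_csSup hbdd2 (Set.mem_image_of_mem _ hx)
  have hC1nn : 0 ≤ C1 := le_trans (by positivity) (hC1le a ha)
  have hC2nn : 0 ≤ C2 := le_trans (abs_nonneg _) (hC2le a ha)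
  -- f' has constant sign
  have hsign : (∀ x ∈ Set.Icc a b, 0 < f' x) ∨ (∀ x ∈ Set.Icc a b, f' x < 0) := by
    by_contra h
    push_neg at h
    obtain ⟨⟨u, hu, hu'⟩, ⟨v, hv, hv'⟩⟩ := h
    have huv : Set.uIcc u v ⊆ Set.Icc a b := Set.uIcc_subset_Icc hu hv
    have h0 : (0 : ℝ) ∈ Set.uIcc (f' u) (f' v) := by
      rw [Set.mem_uIcc]
      left; exact ⟨hu', hv'⟩
    obtain ⟨c, hc, hc0⟩ := intermediate_value_uIcc (hcont.mono huv) h0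
    exact hne c (huv hc) hc0
  -- monotonicity of 1 / f'
  have hsignmul : ∀ x ∈ Set.Icc a b, ∀ y ∈ Set.Icc a b, 0 < f' x * f' y := by
    intro x hx y hy
    rcases hsign with hs | hs
    · exact mul_pos (hs x hx) (hs y hy)
    · exact mul_pos_of_neg_of_neg (hs x hx) (hs y hy)
  have hinvmono : MonotoneOn (fun x => 1 / f' x) (Set.Icc a b) ∨
      AntitoneOn (fun x => 1 / f' x) (Set.Icc a b) := by
    have key : ∀ x ∈ Set.Icc a b, ∀ y ∈ Set.Icc a b, f' x ≤ f' y → 1 / f' y ≤ 1 / f' x := by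
      intro x hx y hy hle
      have h1 : 1 / f' x - 1 / f' y = (f' y - f' x) / (f' x * f' y) := by
        field_simp [hne x hx, hne y hy]
      have h2 : 0 ≤ (f' y - f' x) / (f' x * f' y) :=
        div_nonneg (sub_nonneg.2 hle) (hsignmul x hx y hy).le
      linarith [h1 ▸ h2]
    rcases hmono with hm | hm
    · exact Or.inr fun x hx y hy hxy => key x hx y hy (hm hx hy hxy)
    · exact Or.inl fun x hx y hy hxy => key y hy x hx (hm hx hy hxy)
  -- the amplitude-free van der Corput bound
  have key2 : ∀ c ∈ Set.Icc a b,
      ‖∫ x in a..c, Complex.exp (Complex.I * z * f x)‖ ≤ 2 * C1 / |z| * 2 := by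
    intro c hc
    have hac : a ≤ c := hc.1
    have hsub : Set.Icc a c ⊆ Set.Icc a b := Set.Icc_subset_Icc le_rfl hc.2
    set h : ℝ → ℝ := fun x => 1 / (z * f' x) with hhdef
    set ψ : ℝ → ℂ := fun x => ((z * f' x : ℝ) : ℂ) * Complex.exp (Complex.I * z * f x) with hψdef
    have hcongr : ∫ x in a..c, Complex.exp (Complex.I * z * f x)
        = ∫ x in a..c, (h x : ℂ) * ψ x := by
      refine intervalIntegral.integral_congr fun x hx => ?_
      rw [Set.uIcc_of_le hac] at hx
      have hx' : x ∈ Set.Icc a b := hsub hx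
      simp only [hhdef, hψdef]
      have hzf : (z : ℂ) * (f' x : ℂ) ≠ 0 := by
        exact_mod_cast mul_ne_zero (Complex.ofReal_ne_zero.2 hz) (Complex.ofReal_ne_zero.2 (hne x hx'))
      push_cast
      field_simp
      rw [div_self hzf]
    rw [hcongr]
    have hhc : ContinuousOn h (Set.Icc a c) := by
      apply continuousOn_const.div (continuousOn_const.mul (hcont.mono hsub))
      exact fun x hx => mul_ne_zero hz (hne x (hsub hx))
    have hhm : MonotoneOn h (Set.Icc a c) ∨ AntitoneOn h (Set.Icc a c) := by
      have : h = fun x => (1 / z) * (1 / f' x) := by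
        funext x; simp only [hhdef]; rw [div_mul_div_comm, one_mul]
      rw [this]
      rcases monoAnti_const_mul hinvmono (1 / z) with hm | hm
      · exact Or.inl (hm.mono hsub)
      · exact Or.inr (hm.mono hsub)
    have hψc : ContinuousOn ψ (Set.Icc a c) := by
      apply ContinuousOn.mul
      · exact Complex.continuous_ofReal.comp_continuousOn
          (continuousOn_const.mul (hcont.mono hsub))
      · exact hec.mono hsub
    -- primitive of ψ
    have hψint : ∀ u ∈ Set.Icc a c, ∫ x in a..u, ψ x
        = -Complex.I * Complex.exp (Complex.I * z * f u)
          + Complex.I * Complex.exp (Complex.I * z * f a) := by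
      intro u hu
      have husub : Set.uIcc a u ⊆ Set.Icc a b := by
        rw [Set.uIcc_of_le hu.1]
        exact fun t ht => ⟨ht.1, le_trans ht.2 (le_trans hu.2 hc.2)⟩
      have hFTC : ∀ t ∈ Set.uIcc a u,
          HasDerivAt (fun y => -Complex.I * Complex.exp (Complex.I * z * f y)) (ψ t) t := by
        intro t ht
        have ht' : t ∈ Set.Icc a b := husub ht
        have hw : HasDerivAt (fun y => Complex.I * z * (f y : ℂ))
            (Complex.I * z * (f' t : ℂ)) t :=
          ((hderiv t ht').ofReal_comp).const_mul (Complex.I * z)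
        have hexp := hw.cexp
        have := hexp.const_mul (-Complex.I)
        convert this using 1
        · rfl
        simp only [hψdef]
        push_cast
        have hI : Complex.I * Complex.I = -1 := Complex.I_mul_I
        linear_combination ((z : ℂ) * (f' t : ℂ) * Complex.exp (Complex.I * z * f t)) * hI
      rw [intervalIntegral.integral_eq_sub_of_hasDerivAt hFTC
        ((hψc.mono (by rw [Set.uIcc_of_le hu.1]; exact Set.Icc_subset_Icc le_rfl hu.2)).intervalIntegrable)]
      ring
    have hnorm1 : ∀ t : ℝ, ‖Complex.exp (Complex.I * z * (f t : ℂ))‖ = 1 := by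
      intro t
      rw [Complex.norm_exp]
      have : (Complex.I * z * (f t : ℂ)).re = 0 := by simp [Complex.mul_re]
      rw [this, Real.exp_zero]
    have hCψ : ∀ u ∈ Set.Icc a c, ‖∫ x in a..u, ψ x‖ ≤ 2 := by
      intro u hu
      rw [hψint u hu]
      calc ‖-Complex.I * Complex.exp (Complex.I * z * f u)
          + Complex.I * Complex.exp (Complex.I * z * f a)‖
          ≤ ‖-Complex.I * Complex.exp (Complex.I * z * f u)‖
            + ‖Complex.I * Complex.exp (Complex.I * z * f a)‖ := norm_add_le _ _
        _ ≤ 2 := by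
            rw [norm_mul, norm_mul, norm_neg, Complex.norm_I, one_mul, one_mul,
              hnorm1 u, hnorm1 a]
            norm_num
    have hDh : ∀ x ∈ Set.Icc a c, |h x| + |h x - h a| ≤ 2 * C1 / |z| := by
      intro x hx
      have hx' : x ∈ Set.Icc a b := hsub hx
      have habs : ∀ y ∈ Set.Icc a b, |h y| ≤ C1 / |z| := by
        intro y hy
        calc |h y| = 1 / |f' y| * (1 / |z|) := by
              simp only [hhdef]
              rw [abs_div, abs_one, abs_mul]
              ring
          _ ≤ C1 * (1 / |z|) :=
              mul_le_mul_of_nonneg_right (hC1le y hy) (by positivity)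
          _ = C1 / |z| := by ring
      have hsame : 0 ≤ h x * h a := by
        have h1 : 0 < (z * f' x) * (z * f' a) := by
          have h2 := hsignmul x hx' a ha
          have : (z * f' x) * (z * f' a) = (z * z) * (f' x * f' a) := by ring
          rw [this]
          exact mul_pos (mul_self_pos.2 hz) h2
        have h3 : h x * h a = 1 / ((z * f' x) * (z * f' a)) := by
          simp only [hhdef]; ring
        rw [h3]
        positivity
      have hmax := abs_sub_le_max_of_sign hsame
      have h1 := habs x hx'
      have h2 := habs a ha
      have : max |h x| |h a| ≤ C1 / |z| := max_le h1 h2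
      calc |h x| + |h x - h a| ≤ C1 / |z| + C1 / |z| := add_le_add h1 (le_trans hmax this)
        _ = 2 * C1 / |z| := by ring
    exact abel_bound a c hac h ψ hhc hhm hψc hCψ hDh
  -- main application
  have hDg : ∀ x ∈ Set.Icc a b, |g x| + |g x - g a| ≤ 3 * C2 := by
    intro x hx
    have h1 := hC2le x hx
    have h2 := hC2le a ha
    have : |g x - g a| ≤ |g x| + |g a| := abs_sub _ _
    linarith
  have hmain := abel_bound a b hab g (fun x => Complex.exp (Complex.I * z * f x))
    hgc hgmono hec key2 hDg
  have hflip : ∫ x in a..b, Complex.exp (Complex.I * z * f x) * (g x : ℂ)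
      = ∫ x in a..b, (g x : ℂ) * Complex.exp (Complex.I * z * f x) := by
    refine intervalIntegral.integral_congr fun x hx => ?_
    ring
  rw [hflip]
  calc ‖∫ x in a..b, (g x : ℂ) * Complex.exp (Complex.I * z * f x)‖
      ≤ 3 * C2 * (2 * C1 / |z| * 2) := hmain
    _ = 12 / |z| * C1 * C2 := by field_simp; ring
end

section
/- Let α ∈ (0,1) and b > 0, and let a : ℝ → ℝ be Lipschitz with Lipschitz constant L, and suppose ψ : ℝ → ℝ satisfies |ψ'(ξ)| ≤ Q ξ^{α-1} for ξ ∈ (0, 2b). Then ∫_0^b |a(ψ(b+η)) − a(ψ(b−η))| / η dη ≤ C(L, Q, α) · b^α · ∫_0^2 y^{α-1} log(1/|y-1|) dy, which is finite. -/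
open MeasureTheory Set

open intervalIntegral

private lemma my_rpow_add_le {u t p : ℝ} (hu : 0 ≤ u) (ht : 0 ≤ t)
    (h0 : 0 ≤ p) (h1 : p ≤ 1) : (u + t) ^ p ≤ u ^ p + t ^ p := by
  have h := NNReal.rpow_add_le_add_rpow u.toNNReal t.toNNReal h0 h1
  have h2 : (((u.toNNReal + t.toNNReal) ^ p : NNReal) : ℝ) ≤
      ((u.toNNReal ^ p + t.toNNReal ^ p : NNReal) : ℝ) := by exact_mod_cast h
  simpa [NNReal.coe_rpow, NNReal.coe_add, Real.coe_toNNReal u hu, Real.coe_toNNReal t ht] using h2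

private lemma my_log_le {t : ℝ} (ht : 0 ≤ t) :
    Real.log (1 / t) ≤ 2 * t ^ (-(1:ℝ)/2) := by
  rcases eq_or_lt_of_le ht with h | h
  · simp [← h, Real.zero_rpow (by norm_num : (-(1:ℝ)/2) ≠ 0)]
  · have h1 : Real.log (1 / t) = 2 * Real.log (t ^ (-(1:ℝ)/2)) := by
      rw [Real.log_rpow h, Real.log_div one_ne_zero (ne_of_gt h), Real.log_one]; ring
    have h2 : Real.log (t ^ (-(1:ℝ)/2)) ≤ t ^ (-(1:ℝ)/2) :=
      (Real.log_le_sub_one_of_pos (Real.rpow_pos_of_pos h _)).trans (by linarith)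
    rw [h1]; linarith

/-- Commutator-type estimate: for `a` Lipschitz with constant `L` and
`|ψ'(ξ)| ≤ Q ξ^{α-1}` on `(0, 2b)`,
`∫_0^b |a(ψ(b+η)) − a(ψ(b−η))|/η dη ≤ C(L,Q,α) b^α ∫_0^2 y^{α-1} log(1/|y-1|) dy`. -/
theorem stmt5 (α L Q : ℝ) (hα : α ∈ Set.Ioo (0:ℝ) 1) (hL : 0 ≤ L) (hQ : 0 < Q) :
    ∃ C : ℝ, 0 < C ∧ ∀ (b : ℝ) (a ψ : ℝ → ℝ), 0 < b →
      LipschitzWith (Real.toNNReal L) a →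
      (∀ ξ ∈ Set.Ioo (0:ℝ) (2*b), DifferentiableAt ℝ ψ ξ) →
      (∀ ξ ∈ Set.Ioo (0:ℝ) (2*b), |deriv ψ ξ| ≤ Q * ξ ^ (α - 1)) →
      (∫ η in (0:ℝ)..b, |a (ψ (b + η)) - a (ψ (b - η))| / η) ≤
        C * b ^ α * ∫ y in (0:ℝ)..2, y ^ (α - 1) * Real.log (1 / |y - 1|) := by
  obtain ⟨hα0, hα1⟩ := hα
  set h : ℝ → ℝ := fun y => y ^ (α - 1) * Real.log (1 / |y - 1|) with hh
  have hmeas : Measurable h := by measurability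
  -- log factor nonneg on [0,2]
  have hlognn : ∀ y : ℝ, y ∈ Icc (0:ℝ) 2 → 0 ≤ Real.log (1 / |y - 1|) := by
    intro y hy
    rcases eq_or_lt_of_le (abs_nonneg (y - 1)) with h' | h'
    · simp [← h']
    · refine Real.log_nonneg ?_
      rw [le_div_iff₀ h', one_mul]
      rcases abs_cases (y - 1) with ⟨he, _⟩ | ⟨he, _⟩ <;> rw [he] <;>
        [linarith [hy.2]; linarith [hy.1]]
  -- piece on [0, 1/2]
  have hP1 : IntervalIntegrable h volume 0 (1/2) := by
    have hg : IntervalIntegrable (fun y : ℝ => Real.log 2 * y ^ (α - 1)) volume 0 (1/2) :=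
      (intervalIntegrable_rpow' (by linarith)).const_mul _
    refine hg.mono_fun' hmeas.aestronglyMeasurable ?_
    rw [uIoc_of_le (by norm_num : (0:ℝ) ≤ 1/2), Filter.EventuallyLE,
      ae_restrict_iff' measurableSet_Ioc]
    filter_upwards with y hy
    obtain ⟨hy0, hy2⟩ := hy
    have habs : |y - 1| = 1 - y := by rw [abs_of_nonpos (by linarith)]; ring
    have hlog : Real.log (1 / |y - 1|) ≤ Real.log 2 := by
      rw [habs]
      have : (1:ℝ) / (1 - y) ≤ 2 := by rw [div_le_iff₀ (by linarith)]; linarith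
      exact Real.log_le_log (div_pos one_pos (by linarith)) this
    have hlog0 : 0 ≤ Real.log (1 / |y - 1|) := hlognn y ⟨hy0.le, by linarith⟩
    have hrnn : 0 ≤ y ^ (α - 1) := Real.rpow_nonneg hy0.le _
    simp only [hh, Real.norm_eq_abs, abs_mul, abs_of_nonneg hrnn, abs_of_nonneg hlog0]
    calc y ^ (α - 1) * Real.log (1 / |y - 1|) ≤ y ^ (α - 1) * Real.log 2 :=
          mul_le_mul_of_nonneg_left hlog hrnn
      _ = Real.log 2 * y ^ (α - 1) := by ring
  -- piece on [1/2, 1]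
  have hP2 : IntervalIntegrable h volume (1/2) 1 := by
    have hg0 : IntervalIntegrable (fun x : ℝ => x ^ (-(1:ℝ)/2)) volume 0 (1/2) :=
      intervalIntegrable_rpow' (by norm_num)
    have hg1 : IntervalIntegrable (fun y : ℝ => (1 - y) ^ (-(1:ℝ)/2)) volume (1/2) 1 := by
      have h' := hg0.comp_sub_left 1
      simp only [show (1:ℝ) - 0 = 1 by norm_num, show (1:ℝ) - 1/2 = 1/2 by norm_num] at h'
      exact h'.symm
    refine (hg1.const_mul (2 ^ (1-α) * 2)).mono_fun' hmeas.aestronglyMeasurable ?_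
    rw [uIoc_of_le (by norm_num : (1:ℝ)/2 ≤ 1), Filter.EventuallyLE,
      ae_restrict_iff' measurableSet_Ioc]
    filter_upwards with y hy
    obtain ⟨hy0, hy2⟩ := hy
    have habs : |y - 1| = 1 - y := by rw [abs_of_nonpos (by linarith)]; ring
    have hbase : y ^ (α - 1) ≤ 2 ^ (1 - α) := by
      have h1 : y ^ (α - 1) ≤ (1/2 : ℝ) ^ (α - 1) :=
        Real.rpow_le_rpow_of_nonpos (by norm_num) hy0.le (by linarith)
      have h2 : ((1:ℝ)/2) ^ (α - 1) = 2 ^ (1 - α) := by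
        rw [one_div, show ((2:ℝ)⁻¹) = (2:ℝ) ^ (-1:ℝ) by rw [Real.rpow_neg_one],
          ← Real.rpow_mul (by norm_num : (0:ℝ) ≤ 2)]
        congr 1
        ring
      rw [← h2]; exact h1
    have hlog : Real.log (1 / |y - 1|) ≤ 2 * |y - 1| ^ (-(1:ℝ)/2) :=
      my_log_le (abs_nonneg _)
    have hlog0 : 0 ≤ Real.log (1 / |y - 1|) := hlognn y ⟨by linarith, by linarith⟩
    have hrnn : 0 ≤ y ^ (α - 1) := Real.rpow_nonneg (by linarith) _
    simp only [hh, Real.norm_eq_abs, abs_mul, abs_of_nonneg hrnn, abs_of_nonneg hlog0]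
    calc y ^ (α - 1) * Real.log (1 / |y - 1|)
        ≤ 2 ^ (1 - α) * (2 * |y - 1| ^ (-(1:ℝ)/2)) := by
          apply mul_le_mul hbase hlog hlog0 (by positivity)
      _ = 2 ^ (1 - α) * 2 * (1 - y) ^ (-(1:ℝ)/2) := by rw [habs]; ring
  -- piece on [1, 2]
  have hP3 : IntervalIntegrable h volume 1 2 := by
    have hg0 : IntervalIntegrable (fun x : ℝ => x ^ (-(1:ℝ)/2)) volume 0 1 :=
      intervalIntegrable_rpow' (by norm_num)
    have hg1 : IntervalIntegrable (fun y : ℝ => (y - 1) ^ (-(1:ℝ)/2)) volume 1 2 := by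
      have h' := hg0.comp_sub_right 1
      simp only [show (0:ℝ) + 1 = 1 by norm_num, show (1:ℝ) + 1 = 2 by norm_num] at h'
      exact h'
    refine (hg1.const_mul 2).mono_fun' hmeas.aestronglyMeasurable ?_
    rw [uIoc_of_le (by norm_num : (1:ℝ) ≤ 2), Filter.EventuallyLE,
      ae_restrict_iff' measurableSet_Ioc]
    filter_upwards with y hy
    obtain ⟨hy0, hy2⟩ := hy
    have habs : |y - 1| = y - 1 := abs_of_nonneg (by linarith)
    have hbase : y ^ (α - 1) ≤ 1 :=
      Real.rpow_le_one_of_one_le_of_nonpos (by linarith) (by linarith)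
    have hlog : Real.log (1 / |y - 1|) ≤ 2 * |y - 1| ^ (-(1:ℝ)/2) :=
      my_log_le (abs_nonneg _)
    have hlog0 : 0 ≤ Real.log (1 / |y - 1|) := hlognn y ⟨by linarith, by linarith⟩
    have hrnn : 0 ≤ y ^ (α - 1) := Real.rpow_nonneg (by linarith) _
    simp only [hh, Real.norm_eq_abs, abs_mul, abs_of_nonneg hrnn, abs_of_nonneg hlog0]
    calc y ^ (α - 1) * Real.log (1 / |y - 1|)
        ≤ 1 * (2 * |y - 1| ^ (-(1:ℝ)/2)) := mul_le_mul hbase hlog hlog0 (by norm_num)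
      _ = 2 * (y - 1) ^ (-(1:ℝ)/2) := by rw [habs]; ring
  have hP12 : IntervalIntegrable h volume 0 1 := by
    have := hP1.trans hP2
    exact this
  have hIint : IntervalIntegrable h volume 0 2 := hP12.trans hP3
  -- positivity of I
  have hIpos : 0 < ∫ y in (0:ℝ)..2, h y := by
    have h01 : 0 < ∫ y in (0:ℝ)..1, h y := by
      apply intervalIntegral.intervalIntegral_pos_of_pos_on hP12 _ one_pos
      intro y hy
      have habs : |y - 1| = 1 - y := by rw [abs_of_nonpos (by linarith [hy.2])]; ring
      apply mul_pos (Real.rpow_pos_of_pos hy.1 _)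
      apply Real.log_pos
      rw [habs, lt_div_iff₀ (by linarith [hy.2]), one_mul]
      linarith [hy.1]
    have h12 : 0 ≤ ∫ y in (1:ℝ)..2, h y := by
      apply intervalIntegral.integral_nonneg (by norm_num)
      intro u hu
      exact mul_nonneg (Real.rpow_nonneg (by linarith [hu.1]) _)
        (hlognn u ⟨by linarith [hu.1], hu.2⟩)
    have hadd := intervalIntegral.integral_add_adjacent_intervals hP12 hP3
    linarith [hadd]
  set I : ℝ := ∫ y in (0:ℝ)..2, h y with hIdef
  refine ⟨(L * Q * 2 ^ α / α ^ 2 + 1) / I, div_pos (by positivity) hIpos, ?_⟩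
  intro b a ψ hb hLip hdiff hder
  by_cases hfi : IntervalIntegrable (fun η => |a (ψ (b + η)) - a (ψ (b - η))| / η) volume 0 b
  swap
  · rw [intervalIntegral.integral_undef hfi]
    have hC : 0 < (L * Q * 2 ^ α / α ^ 2 + 1) / I := div_pos (by positivity) hIpos
    have hba : 0 < b ^ α := Real.rpow_pos_of_pos hb α
    positivity
  -- key pointwise bound
  have key : ∀ η ∈ Ioo (0:ℝ) b,
      |a (ψ (b + η)) - a (ψ (b - η))| / η ≤ L * Q * 2 ^ α / α * η ^ (α - 1) := by
    intro η hη
    obtain ⟨hη0, hηb⟩ := hη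
    have hu : (0:ℝ) < b - η := by linarith
    have huv : b - η ≤ b + η := by linarith
    have hQint : IntervalIntegrable (fun ξ : ℝ => Q * ξ ^ (α - 1)) volume (b - η) (b + η) :=
      (intervalIntegrable_rpow' (by linarith)).const_mul Q
    have hbound : ∀ᵐ ξ ∂(volume.restrict (Set.uIoc (b - η) (b + η))), ‖deriv ψ ξ‖ ≤ Q * ξ ^ (α - 1) := by
      rw [uIoc_of_le huv, ae_restrict_iff' measurableSet_Ioc]
      filter_upwards with ξ hξ
      rw [Real.norm_eq_abs]
      exact hder ξ ⟨by linarith [hξ.1], by linarith [hξ.2]⟩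
    have hψint : IntervalIntegrable (deriv ψ) volume (b - η) (b + η) :=
      hQint.mono_fun' (measurable_deriv ψ).aestronglyMeasurable hbound
    have hftc : (∫ ξ in (b - η)..(b + η), deriv ψ ξ) = ψ (b + η) - ψ (b - η) := by
      apply intervalIntegral.integral_deriv_eq_sub _ hψint
      intro x hx
      rw [uIcc_of_le huv] at hx
      exact hdiff x ⟨by linarith [hx.1], by linarith [hx.2]⟩
    have hnorm : |ψ (b + η) - ψ (b - η)| ≤ |∫ ξ in (b - η)..(b + η), Q * ξ ^ (α - 1)| := by
      rw [← hftc, ← Real.norm_eq_abs (∫ ξ in (b - η)..(b + η), deriv ψ ξ)]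
      exact intervalIntegral.norm_integral_le_abs_of_norm_le hbound hQint
    have hval : (∫ ξ in (b - η)..(b + η), Q * ξ ^ (α - 1))
        = Q * (((b + η) ^ α - (b - η) ^ α) / α) := by
      rw [intervalIntegral.integral_const_mul, integral_rpow (Or.inl (by linarith))]
      norm_num
    have hmono' : (b - η) ^ α ≤ (b + η) ^ α :=
      Real.rpow_le_rpow hu.le (by linarith) hα0.le
    have habs_int : |∫ ξ in (b - η)..(b + η), Q * ξ ^ (α - 1)|
        = Q * (((b + η) ^ α - (b - η) ^ α) / α) := by
      rw [hval, abs_of_nonneg]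
      have : 0 ≤ (b + η) ^ α - (b - η) ^ α := by linarith
      positivity
    have hsubadd : (b + η) ^ α - (b - η) ^ α ≤ (2 * η) ^ α := by
      have h1 := my_rpow_add_le (u := b - η) (t := 2 * η) hu.le (by linarith) hα0.le hα1.le
      have h2 : b - η + 2 * η = b + η := by ring
      rw [h2] at h1
      linarith
    have hL2 : |a (ψ (b + η)) - a (ψ (b - η))| ≤ L * |ψ (b + η) - ψ (b - η)| := by
      have h' := hLip.dist_le_mul (ψ (b + η)) (ψ (b - η))
      rw [Real.dist_eq, Real.dist_eq, Real.coe_toNNReal L hL] at h'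
      exact h'
    have hchain : |a (ψ (b + η)) - a (ψ (b - η))| ≤ L * (Q * ((2 * η) ^ α / α)) := by
      calc |a (ψ (b + η)) - a (ψ (b - η))| ≤ L * |ψ (b + η) - ψ (b - η)| := hL2
        _ ≤ L * (Q * (((b + η) ^ α - (b - η) ^ α) / α)) := by
            apply mul_le_mul_of_nonneg_left _ hL
            exact hnorm.trans_eq habs_int
        _ ≤ L * (Q * ((2 * η) ^ α / α)) := by gcongr
    calc |a (ψ (b + η)) - a (ψ (b - η))| / η ≤ L * (Q * ((2 * η) ^ α / α)) / η := by
          gcongr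
      _ = L * Q * 2 ^ α / α * η ^ (α - 1) := by
          rw [Real.mul_rpow (by norm_num) hη0.le, show η ^ (α - 1) = η ^ α / η ^ (1:ℝ) from
            Real.rpow_sub hη0 α 1, Real.rpow_one]
          field_simp
  have hg2 : IntervalIntegrable (fun η : ℝ => L * Q * 2 ^ α / α * η ^ (α - 1)) volume 0 b :=
    (intervalIntegrable_rpow' (by linarith)).const_mul _
  have hmono : (∫ η in (0:ℝ)..b, |a (ψ (b + η)) - a (ψ (b - η))| / η)
      ≤ ∫ η in (0:ℝ)..b, L * Q * 2 ^ α / α * η ^ (α - 1) := by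
    apply intervalIntegral.integral_mono_ae_restrict hb.le hfi hg2
    have hae : ∀ᵐ x : ℝ, x ∉ ({0, b} : Set ℝ) :=
      measure_eq_zero_iff_ae_notMem.mp ((Set.toFinite ({0, b} : Set ℝ)).measure_zero volume)
    rw [Filter.EventuallyLE, ae_restrict_iff' measurableSet_Icc]
    filter_upwards [hae] with x hx hxI
    have hx0 : x ≠ 0 := fun h' => hx (by simp [h'])
    have hxb : x ≠ b := fun h' => hx (by simp [h'])
    exact key x ⟨lt_of_le_of_ne hxI.1 (Ne.symm hx0), lt_of_le_of_ne hxI.2 hxb⟩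
  have hval2 : (∫ η in (0:ℝ)..b, L * Q * 2 ^ α / α * η ^ (α - 1))
      = L * Q * 2 ^ α / α * (b ^ α / α) := by
    rw [intervalIntegral.integral_const_mul, integral_rpow (Or.inl (by linarith))]
    norm_num [Real.zero_rpow (ne_of_gt hα0)]
  have hba : 0 < b ^ α := Real.rpow_pos_of_pos hb α
  have hIne : I ≠ 0 := ne_of_gt hIpos
  calc (∫ η in (0:ℝ)..b, |a (ψ (b + η)) - a (ψ (b - η))| / η)
      ≤ L * Q * 2 ^ α / α * (b ^ α / α) := hmono.trans_eq hval2
    _ = L * Q * 2 ^ α / α ^ 2 * b ^ α := by ring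
    _ ≤ (L * Q * 2 ^ α / α ^ 2 + 1) * b ^ α := by nlinarith
    _ = (L * Q * 2 ^ α / α ^ 2 + 1) / I * b ^ α * I := by
        conv_rhs => rw [mul_right_comm, div_mul_cancel₀ _ hIne]
end
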